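/- Let G1 be the king-move grid graph on ℤ × ℤ, in which two distinct grid points (x,y) and (x',y') are adjacent iff |x−x'| ≤ 1 and |y−y'| ≤ 1 (i.e., each location has edges to its closest eight locations on the grid). If a randomized algorithm A satisfies {ε,G1}-location privacy, then A satisfies ε-Geo-Indistinguishability: for every output z and every pair of grid points s_i, s_j, Pr(A(s_i)=z) ≤ e^{ε · d_E(s_i,s_j)} · Pr(A(s_j)=z), where d_E denotes the Euclidean distance between the grid points. -/

import Mathlib

/-- The king-move grid graph on `ℤ × ℤ`: two distinct grid points are adjacent iff
they differ by at most 1 in each coordinate (each location has edges to its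
closest eight locations on the grid). -/
def kingGraph : SimpleGraph (ℤ × ℤ) where
  Adj p q := p ≠ q ∧ |p.1 - q.1| ≤ 1 ∧ |p.2 - q.2| ≤ 1
  symm := by
    constructor
    intro p q ⟨hne, hx, hy⟩
    exact ⟨hne.symm, by rwa [abs_sub_comm], by rwa [abs_sub_comm]⟩
  loopless := by
    constructor
    intro p h
    exact h.1 rfl

/-- Euclidean distance between two grid points of `ℤ × ℤ`, viewed in `ℝ²`. -/
noncomputable def euclDist (p q : ℤ × ℤ) : ℝ :=
  Real.sqrt (((p.1 - q.1 : ℤ) : ℝ) ^ 2 + ((p.2 - q.2 : ℤ) : ℝ) ^ 2)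

/-- If a randomized algorithm `A` satisfies `{ε,G1}`-location privacy
for the king-move grid graph `G1` on `ℤ × ℤ`, then `A` satisfies
`ε`-Geo-Indistinguishability: for every output `z` and every pair of grid points
`s_i, s_j`, `Pr(A(s_i)=z) ≤ e^{ε · d_E(s_i,s_j)} · Pr(A(s_j)=z)`, with `d_E` the
Euclidean distance. -/
theorem pglp_king_graph_implies_geo_indistinguishability
    {Z : Type*} (A : ℤ × ℤ → Z → ℝ) (ε : ℝ) (hε : 0 ≤ ε)
    (hA : ∀ (s : ℤ × ℤ) (z : Z), 0 ≤ A s z)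
    (hPriv : ∀ (z : Z) (s s' : ℤ × ℤ), kingGraph.Adj s s' →
      A s z ≤ Real.exp ε * A s' z) :
    ∀ (z : Z) (s_i s_j : ℤ × ℤ),
      A s_i z ≤ Real.exp (ε * euclDist s_i s_j) * A s_j z := by
  intro z s_i s_j
  -- Key lemma: Chebyshev distance ≤ n implies factor exp(ε n)
  have key : ∀ n : ℕ, ∀ p q : ℤ × ℤ, |p.1 - q.1| ≤ (n : ℤ) → |p.2 - q.2| ≤ (n : ℤ) →
      A p z ≤ Real.exp (ε * n) * A q z := by
    intro n
    induction n with
    | zero =>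
      intro p q hx hy
      simp only [Nat.cast_zero, abs_nonpos_iff, sub_eq_zero] at hx hy
      have hpq : p = q := Prod.ext hx hy
      simp [hpq]
    | succ n ih =>
      intro p q hx hy
      by_cases hpq : p = q
      · subst hpq
        have h1 : (1 : ℝ) ≤ Real.exp (ε * (n + 1 : ℕ)) := by
          rw [← Real.exp_zero]
          exact Real.exp_le_exp.2 (by positivity)
        nlinarith [hA p z]
      · set p' : ℤ × ℤ := (p.1 - Int.sign (p.1 - q.1), p.2 - Int.sign (p.2 - q.2)) with hp'
        have hsx : |Int.sign (p.1 - q.1)| ≤ 1 := by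
          rcases lt_trichotomy (p.1 - q.1) 0 with h | h | h
          · simp [Int.sign_eq_neg_one_of_neg h]
          · simp [h]
          · simp [Int.sign_eq_one_of_pos h]
        have hsy : |Int.sign (p.2 - q.2)| ≤ 1 := by
          rcases lt_trichotomy (p.2 - q.2) 0 with h | h | h
          · simp [Int.sign_eq_neg_one_of_neg h]
          · simp [h]
          · simp [Int.sign_eq_one_of_pos h]
        have hadj : kingGraph.Adj p p' := by
          refine ⟨?_, by simpa [hp'] using hsx, by simpa [hp'] using hsy⟩
          intro h
          apply hpq
          rw [Prod.ext_iff] at h ⊢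
          have h1 : Int.sign (p.1 - q.1) = 0 := by
            have := h.1; simp [hp'] at this; omega
          have h2 : Int.sign (p.2 - q.2) = 0 := by
            have := h.2; simp [hp'] at this; omega
          rw [Int.sign_eq_zero_iff_zero] at h1 h2
          constructor <;> omega
        have step : ∀ d : ℤ, |d| ≤ (n : ℤ) + 1 → |d - Int.sign d| ≤ (n : ℤ) := by
          intro d hd
          rcases lt_trichotomy d 0 with h | h | h
          · rw [Int.sign_eq_neg_one_of_neg h]
            rw [abs_of_neg h] at hd
            rw [abs_of_nonpos (by omega)]; omega
          · simp [h]
          · rw [Int.sign_eq_one_of_pos h]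
            rw [abs_of_pos h] at hd
            rw [abs_of_nonneg (by omega)]; omega
        have hx' : |p'.1 - q.1| ≤ (n : ℤ) := by
          have : p'.1 - q.1 = (p.1 - q.1) - Int.sign (p.1 - q.1) := by
            simp [hp']; ring
          rw [this]; exact step _ (by push_cast at hx ⊢; omega)
        have hy' : |p'.2 - q.2| ≤ (n : ℤ) := by
          have : p'.2 - q.2 = (p.2 - q.2) - Int.sign (p.2 - q.2) := by
            simp [hp']; ring
          rw [this]; exact step _ (by push_cast at hy ⊢; omega)
        calc A p z ≤ Real.exp ε * A p' z := hPriv z p p' hadj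
          _ ≤ Real.exp ε * (Real.exp (ε * n) * A q z) := by
              have := ih p' q hx' hy'
              nlinarith [Real.exp_pos ε]
          _ = Real.exp (ε * (n + 1 : ℕ)) * A q z := by
              rw [← mul_assoc, ← Real.exp_add]; congr 1; push_cast; ring
  set n : ℕ := max (s_i.1 - s_j.1).natAbs (s_i.2 - s_j.2).natAbs with hn
  have h1 : A s_i z ≤ Real.exp (ε * n) * A s_j z := by
    apply key n
    · have h := le_max_left (s_i.1 - s_j.1).natAbs (s_i.2 - s_j.2).natAbs
      rw [← hn] at h
      rw [Int.abs_eq_natAbs]; exact_mod_cast h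
    · have h := le_max_right (s_i.1 - s_j.1).natAbs (s_i.2 - s_j.2).natAbs
      rw [← hn] at h
      rw [Int.abs_eq_natAbs]; exact_mod_cast h
  refine h1.trans ?_
  have hdle : (n : ℝ) ≤ euclDist s_i s_j := by
    unfold euclDist
    rcases max_cases (s_i.1 - s_j.1).natAbs (s_i.2 - s_j.2).natAbs with ⟨h, _⟩ | ⟨h, _⟩
    · rw [hn, h]
      have : ((s_i.1 - s_j.1).natAbs : ℝ) = |((s_i.1 - s_j.1 : ℤ) : ℝ)| := by
        rw [Nat.cast_natAbs, Int.cast_abs]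
      rw [this, ← Real.sqrt_sq_eq_abs]
      exact Real.sqrt_le_sqrt (by nlinarith [sq_nonneg (((s_i.2 - s_j.2 : ℤ) : ℝ))])
    · rw [hn, h]
      have : ((s_i.2 - s_j.2).natAbs : ℝ) = |((s_i.2 - s_j.2 : ℤ) : ℝ)| := by
        rw [Nat.cast_natAbs, Int.cast_abs]
      rw [this, ← Real.sqrt_sq_eq_abs]
      exact Real.sqrt_le_sqrt (by nlinarith [sq_nonneg (((s_i.1 - s_j.1 : ℤ) : ℝ))])
  have := Real.exp_le_exp.2 (mul_le_mul_of_nonneg_left hdle hε)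
  nlinarith [hA s_j z]
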